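/- Let x be a feasible fractional solution with an MSM decomposition λ. Then for every time e with k+1 ≤ e ≤ k+n, the total weight of MSMs ending exactly at time e satisfies Σ{λ_{I,j} : M_{I,j} is an MSM with j + |I| = e} = Σ_{i≤e} y_{i,e}; consequently the total weight of all MSMs equals z(x): Σ{λ_{I,j} : M_{I,j} is an MSM} = z(x). -/

import Mathlib

open Finset

open scoped Classical in
/-- The next item of the same color as item `i`, or `k+n+2` if `i` is the last of its color. -/
noncomputable def nxt (k n : ℕ) (c : ℕ → ℕ) (i : ℕ) : ℕ :=
  if h : ∃ i', (i < i' ∧ i' ≤ n) ∧ c i' = c i then Nat.find h else k + n + 2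

/-- Feasibility of a fractional solution of the RBM linear program. -/
def Feasible (k n : ℕ) (c : ℕ → ℕ) (x : ℕ → ℕ → ℝ) : Prop :=
  (∀ i j, ¬(1 ≤ i ∧ i ≤ n ∧ max i (k+1) ≤ j ∧ j ≤ k + n) → x i j = 0) ∧
  (∀ i, 1 ≤ i → i ≤ n → ∑ j ∈ Finset.Icc (max i (k+1)) (k+n), x i j = 1) ∧
  (∀ j, k+1 ≤ j → j ≤ k+n → ∑ i ∈ Finset.Icc 1 (min j n), x i j = 1) ∧
  (∀ i, 1 ≤ i → i ≤ n → nxt k n c i ≤ n →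
    ∀ j, nxt k n c i ≤ j → x (nxt k n c i) j - x i (j-1) ≥ 0) ∧
  (∀ i j, 0 ≤ x i j)

/-- The cost `z(x)` of a fractional solution. -/
noncomputable def cost (k n : ℕ) (c : ℕ → ℕ) (x : ℕ → ℕ → ℝ) : ℝ :=
  ∑ i ∈ Finset.Icc 1 n, ∑ j ∈ Finset.Icc (max i (k+1)) (nxt k n c i - 2), x i j

/-- The weight `w_i^j` of item `i` at time `j`. -/
def weight (k : ℕ) (x : ℕ → ℕ → ℝ) (i j : ℕ) : ℝ :=
  1 - ∑ j' ∈ Finset.Icc (max i (k+1)) j, x i j'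

/-- The `s`-th item (0-based) of the chain of same-color items starting at item `i`:
`i, n(i), n(n(i)), …`. -/
noncomputable def chainItem (k n : ℕ) (c : ℕ → ℕ) (i s : ℕ) : ℕ := (nxt k n c)^[s] i

/-- `IsMSM k n c i m j` says that the maximal sequence `I = (i_1,…,i_m)` of consecutive
same-color items starting at `i_1 = i` (so `i_{s+1} = n(i_s)`), matched by
`M_{I,j}(i_s) = j + s`, is a monochromatic sequence matching (MSM): all items are genuine
input items, `j + s ≥ i_s` for all `s`, and `j + m < n(i_m) - 1`. -/
def IsMSM (k n : ℕ) (c : ℕ → ℕ) (i m j : ℕ) : Prop :=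
  1 ≤ i ∧ 1 ≤ m ∧ k ≤ j ∧ j + m ≤ k + n ∧
  (∀ s, s < m → chainItem k n c i s ≤ n) ∧
  (∀ s, s < m → chainItem k n c i s ≤ j + s + 1) ∧
  j + m + 1 < nxt k n c (chainItem k n c i (m - 1))

/-- The (finite) index set of candidate MSM triples `(i, m, j)`:
first item `i`, length `m`, start time `j`. -/
def msmTriples (k n : ℕ) : Finset (ℕ × ℕ × ℕ) :=
  (Finset.Icc 1 n) ×ˢ (Finset.Icc 1 n) ×ˢ (Finset.Icc k (k + n))

open scoped Classical in
/-- `lam` is an MSM decomposition of `x`: a family of nonnegative reals indexed by MSMs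
such that for every item `i` and time `t`,
`x_{i,t} = Σ { λ_{I,j} : M_{I,j} is an MSM with i ∈ I and M_{I,j}(i) = t }`. -/
def IsMSMDecomp (k n : ℕ) (c : ℕ → ℕ) (x : ℕ → ℕ → ℝ) (lam : ℕ × ℕ × ℕ → ℝ) : Prop :=
  (∀ p, 0 ≤ lam p) ∧
  (∀ p, ¬(p ∈ msmTriples k n ∧ IsMSM k n c p.1 p.2.1 p.2.2) → lam p = 0) ∧
  (∀ i t, 1 ≤ i → i ≤ n →
    x i t = ∑ p ∈ (msmTriples k n).filter
        (fun p => IsMSM k n c p.1 p.2.1 p.2.2 ∧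
          ∃ s, s < p.2.1 ∧ chainItem k n c p.1 s = i ∧ p.2.2 + s + 1 = t),
      lam p)

/-- `y_{i,j}`: equals `x_{i,j}` if `n(i) > j + 1`, and `0` otherwise. -/
noncomputable def yval (k n : ℕ) (c : ℕ → ℕ) (x : ℕ → ℕ → ℝ) (i j : ℕ) : ℝ :=
  if j + 1 < nxt k n c i then x i j else 0

/-- `F(t) = Σ_{j=k+1}^{t} Σ_{i ≤ j} y_{i,j}`, the cost accumulated by `x` up to time `t`. -/
noncomputable def Fval (k n : ℕ) (c : ℕ → ℕ) (x : ℕ → ℕ → ℝ) (t : ℕ) : ℝ :=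
  ∑ j ∈ Finset.Icc (k+1) t, ∑ i ∈ Finset.Icc 1 j, yval k n c x i j

/-! An item `i` matched at time `e` with `n(i) > e + 1` must be the last item of its MSM, and
that MSM ends at `e`; so grouping the MSMs ending at `e` by their last item recovers
`Σ_i y_{i,e}` from the decomposition property. Summing over `e` gives `z(x)`. -/

lemma nxt_le (k n : ℕ) (c : ℕ → ℕ) (i : ℕ) : nxt k n c i ≤ k + n + 2 := by
  classical
  unfold nxt
  split
  · next h => have := (Nat.find_spec h).1.2; omega
  · omega

lemma chainItem_succ (k n : ℕ) (c : ℕ → ℕ) (i s : ℕ) :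
    chainItem k n c i (s + 1) = nxt k n c (chainItem k n c i s) :=
  Function.iterate_succ_apply' _ _ _

lemma one_le_chainItem (k n : ℕ) (c : ℕ → ℕ) {i : ℕ} (hi : 1 ≤ i) (s : ℕ) :
    1 ≤ chainItem k n c i s := by
  cases s with
  | zero => exact hi
  | succ s =>
    rw [chainItem_succ]
    unfold nxt
    split
    · next h => exact le_trans (by omega) (Nat.find_spec h).1.1
    · omega

section Feasible

variable {k n : ℕ} {c : ℕ → ℕ} {x : ℕ → ℕ → ℝ}

lemma Feasible.apply_eq_zero_of_lt (hx : Feasible k n c x) {i j : ℕ} (h : j < i) :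
    x i j = 0 :=
  hx.1 i j fun ⟨_, _, hij, _⟩ => by omega

lemma Feasible.apply_eq_zero_of_n_lt (hx : Feasible k n c x) {i : ℕ} (h : n < i) (j : ℕ) :
    x i j = 0 :=
  hx.1 i j fun ⟨_, hi, _⟩ => by omega

lemma yval_eq_zero_of_eq_zero {i j : ℕ} (h : x i j = 0) : yval k n c x i j = 0 := by
  simp [yval, h]

lemma Feasible.sum_yval_eq_cost_row (hx : Feasible k n c x) {i : ℕ} :
    ∑ e ∈ Icc (k + 1) (k + n), yval k n c x i e
      = ∑ j ∈ Icc (max i (k + 1)) (nxt k n c i - 2), x i j := by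
  have hrange : (Icc (k + 1) (k + n)).filter (fun e => e + 1 < nxt k n c i)
      = Icc (k + 1) (nxt k n c i - 2) := by
    ext e
    simp only [mem_filter, mem_Icc]
    have := nxt_le k n c i
    omega
  calc ∑ e ∈ Icc (k + 1) (k + n), yval k n c x i e
      = ∑ e ∈ Icc (k + 1) (nxt k n c i - 2), x i e := by
        simp only [yval]
        rw [← sum_filter, hrange]
    _ = ∑ j ∈ Icc (max i (k + 1)) (nxt k n c i - 2), x i j := by
        refine (sum_subset (Icc_subset_Icc_left (le_max_right _ _)) fun e he he' => ?_).symm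
        simp only [mem_Icc] at he he'
        exact hx.apply_eq_zero_of_lt (by omega)

/-- `x_{i,j}` vanishes unless `i ≤ min j n`, so both sides add up the same values `y_{i,j}`. -/
lemma Feasible.cost_eq_Fval (hx : Feasible k n c x) : cost k n c x = Fval k n c x (k + n) := by
  have hcols : ∀ e ∈ Icc (k + 1) (k + n),
      ∑ i ∈ Icc 1 e, yval k n c x i e = ∑ i ∈ Icc 1 (k + n), yval k n c x i e := by
    intro e he
    refine sum_subset (Icc_subset_Icc_right (mem_Icc.1 he).2) fun i hi hi' => ?_
    simp only [mem_Icc] at hi hi'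
    exact yval_eq_zero_of_eq_zero (hx.apply_eq_zero_of_lt (by omega))
  have hrows : ∑ i ∈ Icc 1 n, ∑ j ∈ Icc (max i (k + 1)) (nxt k n c i - 2), x i j
      = ∑ i ∈ Icc 1 (k + n), ∑ j ∈ Icc (max i (k + 1)) (nxt k n c i - 2), x i j := by
    refine sum_subset (Icc_subset_Icc_right (by omega)) fun i hi hi' => ?_
    simp only [mem_Icc] at hi hi'
    exact sum_eq_zero fun j _ => hx.apply_eq_zero_of_n_lt (by omega) j
  rw [cost, Fval, sum_congr rfl hcols, sum_comm, hrows]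
  exact sum_congr rfl fun i _ => hx.sum_yval_eq_cost_row.symm

end Feasible

section IsMSM

variable {k n : ℕ} {c : ℕ → ℕ} {i m j : ℕ}

lemma IsMSM.end_mem_Icc (h : IsMSM k n c i m j) : j + m ∈ Icc (k + 1) (k + n) := by
  obtain ⟨-, hm, hj, hend, -⟩ := h
  exact mem_Icc.2 ⟨by omega, hend⟩

lemma IsMSM.chainItem_last_mem_Icc (h : IsMSM k n c i m j) :
    chainItem k n c i (m - 1) ∈ Icc 1 (j + m) := by
  obtain ⟨hi, hm, -, -, -, htime, -⟩ := h
  exact mem_Icc.2 ⟨one_le_chainItem k n c hi _, by have := htime (m - 1) (by omega); omega⟩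

lemma IsMSM.chainItem_last_le (h : IsMSM k n c i m j) : chainItem k n c i (m - 1) ≤ n :=
  h.2.2.2.2.1 (m - 1) (by have := h.2.1; omega)

/-- Otherwise `n(i')` would be the next item of the MSM, matched at time `e + 1 < n(i')`. -/
lemma IsMSM.matched_at_iff_last (h : IsMSM k n c i m j) {i' e : ℕ}
    (he : e + 1 < nxt k n c i') :
    (∃ s, s < m ∧ chainItem k n c i s = i' ∧ j + s + 1 = e)
      ↔ j + m = e ∧ chainItem k n c i (m - 1) = i' := by
  obtain ⟨-, hm, -, -, -, htime, -⟩ := h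
  constructor
  · rintro ⟨s, hs, rfl, rfl⟩
    obtain rfl : s = m - 1 := by
      by_contra hne
      have hnext := htime (s + 1) (by omega)
      rw [chainItem_succ] at hnext
      omega
    exact ⟨by omega, rfl⟩
  · rintro ⟨rfl, rfl⟩
    exact ⟨m - 1, by omega, rfl, by omega⟩

end IsMSM

section Decomposition

variable {k n : ℕ} {c : ℕ → ℕ} {x : ℕ → ℕ → ℝ} {lam : ℕ × ℕ × ℕ → ℝ}

open scoped Classical in
lemma sum_msm_ending_at_with_last_eq_yval (hx : Feasible k n c x)
    (hlam : IsMSMDecomp k n c x lam) {i e : ℕ} (hi : 1 ≤ i) :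
    ∑ p ∈ (msmTriples k n).filter (fun p => (IsMSM k n c p.1 p.2.1 p.2.2 ∧
        p.2.2 + p.2.1 = e) ∧ chainItem k n c p.1 (p.2.1 - 1) = i), lam p
      = yval k n c x i e := by
  by_cases hlive : i ≤ n ∧ e + 1 < nxt k n c i
  · rw [yval, if_pos hlive.2, hlam.2.2 i e hi hlive.1]
    refine sum_congr (filter_congr fun p _ => ?_) fun _ _ => rfl
    constructor
    · rintro ⟨⟨hp, hend⟩, hlast⟩
      exact ⟨hp, (hp.matched_at_iff_last hlive.2).2 ⟨hend, hlast⟩⟩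
    · rintro ⟨hp, hmatch⟩
      obtain ⟨hend, hlast⟩ := (hp.matched_at_iff_last hlive.2).1 hmatch
      exact ⟨⟨hp, hend⟩, hlast⟩
  · have hempty : ∀ p ∈ msmTriples k n, ¬((IsMSM k n c p.1 p.2.1 p.2.2 ∧
        p.2.2 + p.2.1 = e) ∧ chainItem k n c p.1 (p.2.1 - 1) = i) := by
      rintro p - ⟨⟨hp, rfl⟩, rfl⟩
      exact hlive ⟨hp.chainItem_last_le, by have := hp.2.2.2.2.2.2; omega⟩
    rw [filter_false_of_mem hempty, sum_empty, yval]
    split_ifs with hnxt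
    · exact (hx.apply_eq_zero_of_n_lt (by omega) e).symm
    · rfl

open scoped Classical in
lemma sum_msm_ending_at_eq_sum_yval (hx : Feasible k n c x)
    (hlam : IsMSMDecomp k n c x lam) (e : ℕ) :
    ∑ p ∈ (msmTriples k n).filter
        (fun p => IsMSM k n c p.1 p.2.1 p.2.2 ∧ p.2.2 + p.2.1 = e), lam p
      = ∑ i ∈ Icc 1 e, yval k n c x i e := by
  have hlast : ∀ p ∈ (msmTriples k n).filter
      (fun p => IsMSM k n c p.1 p.2.1 p.2.2 ∧ p.2.2 + p.2.1 = e),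
      chainItem k n c p.1 (p.2.1 - 1) ∈ Icc 1 e := by
    intro p hp
    obtain ⟨-, hmsm, rfl⟩ := mem_filter.1 hp
    exact hmsm.chainItem_last_mem_Icc
  rw [← sum_fiberwise_of_maps_to hlast]
  refine sum_congr rfl fun i hi => ?_
  rw [filter_filter]
  exact sum_msm_ending_at_with_last_eq_yval hx hlam (mem_Icc.1 hi).1

end Decomposition

open scoped Classical in
theorem stmt11_general (k n : ℕ) (c : ℕ → ℕ) (x : ℕ → ℕ → ℝ)
    (hx : Feasible k n c x) (lam : ℕ × ℕ × ℕ → ℝ)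
    (hlam : IsMSMDecomp k n c x lam) :
    (∀ e, k + 1 ≤ e → e ≤ k + n →
      ∑ p ∈ (msmTriples k n).filter
          (fun p => IsMSM k n c p.1 p.2.1 p.2.2 ∧ p.2.2 + p.2.1 = e), lam p
        = ∑ i ∈ Finset.Icc 1 e, yval k n c x i e) ∧
    ∑ p ∈ (msmTriples k n).filter
        (fun p => IsMSM k n c p.1 p.2.1 p.2.2), lam p = cost k n c x := by
  refine ⟨fun e _ _ => sum_msm_ending_at_eq_sum_yval hx hlam e, ?_⟩
  have hend : ∀ p ∈ (msmTriples k n).filter (fun p => IsMSM k n c p.1 p.2.1 p.2.2),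
      p.2.2 + p.2.1 ∈ Icc (k + 1) (k + n) :=
    fun p hp => (mem_filter.1 hp).2.end_mem_Icc
  rw [← sum_fiberwise_of_maps_to hend, hx.cost_eq_Fval, Fval]
  refine sum_congr rfl fun e _ => ?_
  rw [filter_filter]
  exact sum_msm_ending_at_eq_sum_yval hx hlam e

open scoped Classical in
/-- For a feasible fractional solution `x` with MSM decomposition `λ`: for every time
`e ∈ [k+1, k+n]`, the total weight of MSMs ending exactly at time `e` equals
`Σ_{i ≤ e} y_{i,e}`; consequently the total weight of all MSMs equals `z(x)`. -/
theorem stmt11 (k n : ℕ) (hk : 1 ≤ k) (hn : 1 ≤ n) (c : ℕ → ℕ) (x : ℕ → ℕ → ℝ)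
    (hx : Feasible k n c x) (lam : ℕ × ℕ × ℕ → ℝ)
    (hlam : IsMSMDecomp k n c x lam) :
    (∀ e, k + 1 ≤ e → e ≤ k + n →
      ∑ p ∈ (msmTriples k n).filter
          (fun p => IsMSM k n c p.1 p.2.1 p.2.2 ∧ p.2.2 + p.2.1 = e), lam p
        = ∑ i ∈ Finset.Icc 1 e, yval k n c x i e) ∧
    ∑ p ∈ (msmTriples k n).filter
        (fun p => IsMSM k n c p.1 p.2.1 p.2.2), lam p = cost k n c x :=
  stmt11_general k n c x hx lam hlam
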